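/- Let n = 2ᵏpᵐ where p is an odd prime and k, m ≥ 1. Then the subgroups H₁ = ⟨x^{2^{k−1}pᵐ}⟩, K₁ = ⟨x^{2^{k−1}pᵐ}, y⟩, H₂ = ⟨y⟩, K₂ = ⟨x^{2ᵏ}, y⟩, H₃ = ⟨x^{2ᵏ}⟩ and K₃ = ⟨x⟩ form a crown of order 6 in the subgroup lattice of the dihedral group D_{2n} = ⟨x, y ∣ xⁿ = y² = 1, yxy = x⁻¹⟩; in particular, L(D_{2n}) is not dismantlable. -/

import Mathlib

/-!
If `s` is a sublattice and `s ∪ {w}` contains a crown, then so does `s`: if `w = x j`, replace it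
by `y (j - 1) ⊓ y j`, which lies in `s` and is comparable to exactly the same crown elements as
`x j`; dually if `w = y j`. Along a dismantling chain a crown would thus descend to the
one-element sublattice `L₁`, which is absurd.

In `D_{2n}` the subgroups `⟨r a⟩` and `⟨r a, sr 0⟩` depend only on the subgroup `A = ⟨a⟩` of
`ℤ/n`, and inclusions among them are inclusions among these subgroups of `ℤ/n` (with `⟨sr 0⟩` for
`A = 0` and `⟨r 1⟩` for `A = ℤ/n`). Hence any two incomparable subgroups `A`, `B` of `ℤ/n` yield
the crown `⟨A⟩ ≤ ⟨A, sr 0⟩ ≥ ⟨sr 0⟩ ≤ ⟨B, sr 0⟩ ≥ ⟨B⟩ ≤ ⟨r 1⟩ ≥ ⟨A⟩`; here `A = ⟨2^(k-1) p^m⟩`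
and `B = ⟨2^k⟩`.
-/

/-- A finite lattice `L` with `n` elements is *dismantlable* if there is a chain
`L₁ ⊆ L₂ ⊆ ... ⊆ Lₙ = L` of sublattices of `L` with `|Lᵢ| = i` for `i = 1, ..., n`. -/
def Dismantlable (L : Type*) [Lattice L] [Finite L] : Prop :=
  ∃ c : ℕ → Set L,
    (∀ i, 1 ≤ i → i ≤ Nat.card L → IsSublattice (c i) ∧ Nat.card (c i) = i) ∧
    (∀ i, 1 ≤ i → i < Nat.card L → c i ⊆ c (i + 1)) ∧
    c (Nat.card L) = Set.univ

/-- `x 0, y 0, x 1, y 1, ..., x (n-1), y (n-1)` form a *crown of order `2n`* (for `n ≥ 3`)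
in a poset: the `2n` elements are pairwise distinct, and the only comparability relations
among them are `x i ≤ y i` and `x (i+1) ≤ y i` (indices mod `n`). -/
def IsCrown {P : Type*} [PartialOrder P] {n : ℕ} (x y : Fin n → P) : Prop :=
  3 ≤ n ∧ Function.Injective x ∧ Function.Injective y ∧
  (∀ i j, x i ≠ y j) ∧
  (∀ i j, x i ≤ x j → i = j) ∧
  (∀ i j, y i ≤ y j → i = j) ∧
  (∀ i j, ¬ y i ≤ x j) ∧
  (∀ i j, x i ≤ y j ↔ (i = j ∨ (i : ℕ) = ((j : ℕ) + 1) % n))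

lemma Fin.val_eq_add_one_mod_iff {n : ℕ} [NeZero n] {i j : Fin n} :
    (i : ℕ) = ((j : ℕ) + 1) % n ↔ i = j + 1 := by
  rw [Fin.ext_iff, Fin.val_add, Fin.val_one', Nat.add_mod_mod]

lemma Fin.add_one_ne_self {n : ℕ} [NeZero n] (hn : 2 ≤ n) (j : Fin n) : j + 1 ≠ j := by
  rw [Ne, add_eq_left, Fin.ext_iff, Fin.val_one', Nat.mod_eq_of_lt (by omega : 1 < n)]
  simp

lemma Fin.sub_one_ne_add_one {n : ℕ} [NeZero n] (hn : 3 ≤ n) (j : Fin n) : j - 1 ≠ j + 1 := by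
  rw [Ne, sub_eq_iff_eq_add, add_assoc, left_eq_add, Fin.ext_iff, Fin.val_add, Fin.val_one',
    Nat.mod_eq_of_lt (by omega : 1 < n), Nat.mod_eq_of_lt (by omega : 2 < n)]
  simp

section Crown

open OrderDual

def HasCrownIn {P : Type*} [PartialOrder P] (n : ℕ) (s : Set P) : Prop :=
  ∃ x y : Fin n → P, IsCrown x y ∧ (∀ i, x i ∈ s) ∧ ∀ i, y i ∈ s

variable {P : Type*} {n : ℕ} [NeZero n] {x y : Fin n → P}

lemma isCrown_of_le_iff [PartialOrder P] (hn : 3 ≤ n) (hx : ∀ i j, x i ≤ x j → i = j)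
    (hy : ∀ i j, y i ≤ y j → i = j) (hyx : ∀ i j, ¬ y i ≤ x j)
    (hxy : ∀ i j, x i ≤ y j ↔ i = j ∨ i = j + 1) : IsCrown x y :=
  ⟨hn, fun i j h => hx i j h.le, fun i j h => hy i j h.le, fun i j h => hyx j i h.ge, hx, hy, hyx,
    fun i j => by rw [Fin.val_eq_add_one_mod_iff]; exact hxy i j⟩

lemma IsCrown.le_iff [PartialOrder P] (h : IsCrown x y) {i j : Fin n} :
    x i ≤ y j ↔ i = j ∨ i = j + 1 := by
  rw [h.2.2.2.2.2.2.2, Fin.val_eq_add_one_mod_iff]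

lemma IsCrown.dual [PartialOrder P] (h : IsCrown x y) :
    IsCrown (toDual ∘ y ∘ Neg.neg) (toDual ∘ x ∘ Neg.neg) := by
  obtain ⟨hn, -, -, -, hx, hy, hyx, -⟩ := id h
  refine isCrown_of_le_iff hn (fun i j hij => neg_injective (hy _ _ hij).symm)
    (fun i j hij => neg_injective (hx _ _ hij).symm) (fun i j => hyx _ _) fun i j => ?_
  change x (-j) ≤ y (-i) ↔ _
  rw [h.le_iff, neg_inj, eq_comm (a := j), eq_neg_add_iff_add_eq, add_neg_eq_iff_eq_add,
    add_comm 1]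

lemma IsCrown.update_inf [SemilatticeInf P] (h : IsCrown x y) (j : Fin n)
    (hne : y (j - 1) ⊓ y j ≠ x j) : IsCrown (Function.update x j (y (j - 1) ⊓ y j)) y := by
  obtain ⟨hn, -, -, -, hx, hy, hyx, -⟩ := id h
  have hj : j - 1 ≠ j := fun e => Fin.add_one_ne_self (by omega) (j - 1) (by rw [sub_add_cancel, e])
  set z := y (j - 1) ⊓ y j
  have hxz : x j ≤ z :=
    le_inf (h.le_iff.2 (Or.inr (sub_add_cancel j 1).symm)) (h.le_iff.2 (Or.inl rfl))
  have hz_le : ∀ l, z ≤ y l ↔ j = l ∨ j = l + 1 := fun l =>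
    ⟨fun hl => h.le_iff.1 (hxz.trans hl), by
      rintro (rfl | rfl)
      · exact inf_le_right
      · simp [z]⟩
  have hle_z : ∀ l, x l ≤ z → l = j := fun l hl => by
    have h1 := h.le_iff.1 (hl.trans inf_le_left)
    rw [sub_add_cancel] at h1
    rcases h.le_iff.1 (hl.trans inf_le_right) with rfl | rfl
    · rfl
    · rcases h1 with e | e
      · exact absurd e.symm (Fin.sub_one_ne_add_one hn j)
      · exact absurd e (Fin.add_one_ne_self (by omega) j)
  have hy_z : ∀ l, ¬ y l ≤ z := fun l hl =>
    hj ((hy _ _ (hl.trans inf_le_left)).symm.trans (hy _ _ (hl.trans inf_le_right)))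
  have hz_x : ∀ l, ¬ z ≤ x l := fun l hl => by
    obtain rfl := hx _ _ (hxz.trans hl)
    exact hne (le_antisymm hl hxz)
  refine isCrown_of_le_iff hn (fun i l hil => ?_) hy (fun i l => ?_) (fun i l => ?_)
  · rw [Function.update_apply, Function.update_apply] at hil
    split_ifs at hil with hi hl hl
    · exact hi.trans hl.symm
    · exact absurd hil (hz_x l)
    · exact (hle_z i hil).trans hl.symm
    · exact hx i l hil
  · rw [Function.update_apply]
    split_ifs
    exacts [hy_z i, hyx i l]
  · rw [Function.update_apply]
    split_ifs with hi
    exacts [hi ▸ hz_le l, h.le_iff]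

lemma IsCrown.hasCrownIn_of_infClosed [SemilatticeInf P] {s : Set P} {j : Fin n}
    (hs : InfClosed s) (h : IsCrown x y) (hxj : x j ∉ s) (hx : ∀ i ≠ j, x i ∈ s)
    (hy : ∀ i, y i ∈ s) : HasCrownIn n s := by
  have hz : y (j - 1) ⊓ y j ∈ s := hs (hy _) (hy _)
  refine ⟨_, y, h.update_inf j (ne_of_mem_of_not_mem hz hxj), fun i => ?_, hy⟩
  rcases eq_or_ne i j with rfl | hi
  · simpa using hz
  · simpa [hi] using hx i hi

lemma IsCrown.hasCrownIn_of_supClosed [SemilatticeSup P] {s : Set P} {j : Fin n}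
    (hs : SupClosed s) (h : IsCrown x y) (hyj : y j ∉ s) (hx : ∀ i, x i ∈ s)
    (hy : ∀ i ≠ j, y i ∈ s) : HasCrownIn n s := by
  obtain ⟨x', y', h', hx', hy'⟩ := h.dual.hasCrownIn_of_infClosed (s := ofDual ⁻¹' s) (j := -j)
    hs (show y (- -j) ∉ s by rwa [neg_neg]) (fun i hi => hy _ fun e => hi (by rw [← e, neg_neg]))
    (fun i => hx _)
  exact ⟨fun i => ofDual (y' (-i)), fun i => ofDual (x' (-i)), h'.dual, fun i => hy' _,
    fun i => hx' _⟩

lemma HasCrownIn.of_insert [Lattice P] {s : Set P} {w : P} (hs : IsSublattice s)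
    (h : HasCrownIn n (insert w s)) : HasCrownIn n s := by
  obtain ⟨x, y, h, hx, hy⟩ := h
  obtain ⟨-, hx_inj, hy_inj, hxy, -⟩ := id h
  by_cases hys : ∀ i, y i ∈ s
  · by_cases hxs : ∀ i, x i ∈ s
    · exact ⟨x, y, h, hxs, hys⟩
    obtain ⟨j, hj⟩ := not_forall.1 hxs
    have hw : x j = w := (hx j).resolve_right hj
    exact h.hasCrownIn_of_infClosed hs.infClosed hj
      (fun i hi => (hx i).resolve_left fun e => hi (hx_inj (e.trans hw.symm))) hys
  · obtain ⟨j, hj⟩ := not_forall.1 hys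
    have hw : y j = w := (hy j).resolve_right hj
    exact h.hasCrownIn_of_supClosed hs.supClosed hj
      (fun i => (hx i).resolve_left fun e => hxy i j (e.trans hw.symm))
      (fun i hi => (hy i).resolve_left fun e => hi (hy_inj (e.trans hw.symm)))

end Crown

theorem not_dismantlable_of_isCrown {L : Type*} [Lattice L] [Finite L] {n : ℕ}
    {x y : Fin n → L} (h : IsCrown x y) : ¬ Dismantlable L := by
  have : NeZero n := ⟨by have := h.1; omega⟩
  rintro ⟨c, hc, hchain, htop⟩
  have key : ∀ i (hi : i ≤ Nat.card L), 1 ≤ i → HasCrownIn n (c i) := by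
    intro i hi
    induction hi using Nat.decreasingInduction with
    | self => exact fun _ => ⟨x, y, h, by simp [htop], by simp [htop]⟩
    | of_succ i hi ih =>
      intro hi1
      obtain ⟨w, -, hw⟩ := (Set.exists_eq_insert_iff_ncard).2 ⟨hchain i hi1 hi, by
        rw [← Nat.card_coe_set_eq, ← Nat.card_coe_set_eq, (hc i hi1 hi.le).2,
          (hc (i + 1) (by omega) hi).2]⟩
      exact .of_insert (hc i hi1 hi.le).1 (hw ▸ ih (by omega))
  have : Nonempty L := ⟨x 0⟩
  obtain ⟨x', y', ⟨-, -, -, hxy', -⟩, hx', hy'⟩ := key 1 Nat.card_pos le_rfl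
  have hc1 : (c 1).Subsingleton := by
    rw [← Set.ncard_le_one_iff_subsingleton, ← Nat.card_coe_set_eq, (hc 1 le_rfl Nat.card_pos).2]
  exact hxy' 0 0 (hc1 (hx' 0) (hy' 0))

open AddSubgroup in
lemma ZMod.natCast_mem_zmultiples_natCast_iff {n a b : ℕ} (hb : b ∣ n) :
    (a : ZMod n) ∈ zmultiples (b : ZMod n) ↔ b ∣ a := by
  refine ⟨fun ⟨k, hk⟩ => ?_, fun ⟨c, hc⟩ => ⟨c, by simp [hc, mul_comm]⟩⟩
  have := congrArg (ZMod.castHom hb (ZMod b)) hk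
  rwa [map_zsmul, map_natCast, map_natCast, ZMod.natCast_self, smul_zero, eq_comm,
    ZMod.natCast_eq_zero_iff] at this

open AddSubgroup in
lemma ZMod.zmultiples_one_eq_top {n : ℕ} : zmultiples (1 : ZMod n) = ⊤ :=
  eq_top_iff.2 fun c _ => by
    obtain ⟨k, rfl⟩ := ZMod.intCast_surjective c
    exact intCast_mem_zmultiples_one k

namespace DihedralGroup

open AddSubgroup Subgroup

variable {n : ℕ} {A B : AddSubgroup (ZMod n)} {c : ZMod n}

def rotations (A : AddSubgroup (ZMod n)) : Subgroup (DihedralGroup n) where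
  carrier := {g | match g with | r c => c ∈ A | sr _ => False}
  one_mem' := A.zero_mem
  mul_mem' := by
    rintro (a | a) (b | b) ha hb
    exacts [A.add_mem ha hb, hb.elim, ha.elim, ha.elim]
  inv_mem' := by
    rintro (a | a) ha
    exacts [A.neg_mem ha, ha]

def dihedralSubgroup (A : AddSubgroup (ZMod n)) : Subgroup (DihedralGroup n) where
  carrier := {g | match g with | r c => c ∈ A | sr c => c ∈ A}
  one_mem' := A.zero_mem
  mul_mem' := by
    rintro (a | a) (b | b) ha hb
    exacts [A.add_mem ha hb, A.sub_mem hb ha, A.add_mem ha hb, A.sub_mem hb ha]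
  inv_mem' := by
    rintro (a | a) ha
    exacts [A.neg_mem ha, ha]

@[simp] lemma r_mem_rotations : r c ∈ rotations A ↔ c ∈ A := Iff.rfl

@[simp] lemma sr_notMem_rotations : sr c ∉ rotations A := id

@[simp] lemma r_mem_dihedralSubgroup : r c ∈ dihedralSubgroup A ↔ c ∈ A := Iff.rfl

@[simp] lemma sr_mem_dihedralSubgroup : sr c ∈ dihedralSubgroup A ↔ c ∈ A := Iff.rfl

@[simp] lemma rotations_le_rotations_iff : rotations A ≤ rotations B ↔ A ≤ B :=
  ⟨fun h c hc => r_mem_rotations.1 (h (r_mem_rotations.2 hc)), by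
    rintro h (c | c) hc
    exacts [h hc, hc.elim]⟩

@[simp] lemma rotations_le_dihedralSubgroup_iff : rotations A ≤ dihedralSubgroup B ↔ A ≤ B :=
  ⟨fun h c hc => r_mem_dihedralSubgroup.1 (h (r_mem_rotations.2 hc)), by
    rintro h (c | c) hc
    exacts [h hc, hc.elim]⟩

@[simp] lemma dihedralSubgroup_le_dihedralSubgroup_iff :
    dihedralSubgroup A ≤ dihedralSubgroup B ↔ A ≤ B :=
  ⟨fun h c hc => h (show r c ∈ dihedralSubgroup A from hc), fun h g => by cases g <;> exact @h _⟩

@[simp] lemma not_dihedralSubgroup_le_rotations : ¬ dihedralSubgroup A ≤ rotations B :=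
  fun h => h (show sr 0 ∈ dihedralSubgroup A from A.zero_mem)

lemma closure_r_eq (a : ZMod n) : closure {r a} = rotations (zmultiples a) := by
  rw [← zpowers_eq_closure]
  ext (c | c) <;> simp [mem_zpowers_iff, r_zpow, mem_zmultiples_iff, mul_comm]

lemma closure_r_sr_zero_eq (a : ZMod n) :
    closure {r a, sr 0} = dihedralSubgroup (zmultiples a) := by
  refine le_antisymm ((Subgroup.closure_le _).2 ?_) ?_
  · rintro g (rfl | rfl) <;> simp [mem_zmultiples]
  · have hr : rotations (zmultiples a) ≤ closure {r a, sr 0} :=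
      closure_r_eq a ▸ closure_mono (by simp)
    rintro (c | c) hc
    · exact hr hc
    · rw [show sr c = sr 0 * r c by simp [sr_mul_r]]
      exact mul_mem (subset_closure (by simp)) (hr hc)

lemma closure_sr_zero_eq : closure {sr (0 : ZMod n)} = dihedralSubgroup ⊥ := by
  simpa [r_zero, closure_insert_one] using closure_r_sr_zero_eq (n := n) 0

theorem isCrown_rotations_dihedralSubgroup (hAB : ¬ A ≤ B) (hBA : ¬ B ≤ A) :
    IsCrown ![rotations A, dihedralSubgroup ⊥, rotations B]
      ![dihedralSubgroup A, dihedralSubgroup B, rotations ⊤] := by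
  have hA_bot : ¬ A ≤ ⊥ := fun h => hAB (h.trans bot_le)
  have hB_bot : ¬ B ≤ ⊥ := fun h => hBA (h.trans bot_le)
  have hA_top : ¬ ⊤ ≤ A := fun h => hBA (le_top.trans h)
  have hB_top : ¬ ⊤ ≤ B := fun h => hAB (le_top.trans h)
  have h_top : (⊤ : AddSubgroup (ZMod n)) ≠ ⊥ := fun h => hA_bot (h ▸ le_top)
  refine isCrown_of_le_iff le_rfl ?_ ?_ ?_ ?_ <;> intro i j <;> fin_cases i <;> fin_cases j <;>
    simp [hAB, hBA, hA_bot, hB_bot, hA_top, hB_top, h_top]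

end DihedralGroup

/-- Let `n = 2 ^ k * p ^ m` with `p` an odd prime and `k, m ≥ 1`. Then in the dihedral
group `D_{2n}` (with rotation `x = r 1` and reflection `y = sr 0`) the subgroups
`H₁ = ⟨x^(2^(k-1) p^m)⟩`, `K₁ = ⟨x^(2^(k-1) p^m), y⟩`, `H₂ = ⟨y⟩`, `K₂ = ⟨x^(2^k), y⟩`,
`H₃ = ⟨x^(2^k)⟩`, `K₃ = ⟨x⟩` form a crown of order 6 in the subgroup lattice;
in particular that lattice is not dismantlable. -/
theorem stmt18 (k m p : ℕ) (hp : p.Prime) (hodd : Odd p) (hk : 1 ≤ k) (hm : 1 ≤ m) :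
    haveI : NeZero (2 ^ k * p ^ m) := ⟨Nat.mul_ne_zero (pow_ne_zero k two_ne_zero) (pow_ne_zero m hp.ne_zero)⟩
    IsCrown
      (![Subgroup.closure {DihedralGroup.r ((2 ^ (k - 1) * p ^ m : ℕ) :
            ZMod (2 ^ k * p ^ m))},
         Subgroup.closure {DihedralGroup.sr 0},
         Subgroup.closure {DihedralGroup.r ((2 ^ k : ℕ) : ZMod (2 ^ k * p ^ m))}] :
        Fin 3 → Subgroup (DihedralGroup (2 ^ k * p ^ m)))
      ![Subgroup.closure {DihedralGroup.r ((2 ^ (k - 1) * p ^ m : ℕ) :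
            ZMod (2 ^ k * p ^ m)), DihedralGroup.sr 0},
        Subgroup.closure {DihedralGroup.r ((2 ^ k : ℕ) : ZMod (2 ^ k * p ^ m)),
          DihedralGroup.sr 0},
        Subgroup.closure {DihedralGroup.r ((1 : ℕ) : ZMod (2 ^ k * p ^ m))}] ∧
    ¬ Dismantlable (Subgroup (DihedralGroup (2 ^ k * p ^ m))) := by
  have h2p : Nat.Coprime 2 p := Nat.coprime_two_left.2 hodd
  have hba : ¬ 2 ^ k ∣ 2 ^ (k - 1) * p ^ m := fun h => by
    have := (Nat.pow_dvd_pow_iff_le_right Nat.one_lt_two).1 ((h2p.pow k m).dvd_of_dvd_mul_right h)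
    omega
  have hab : ¬ 2 ^ (k - 1) * p ^ m ∣ 2 ^ k := fun h =>
    hp.ne_one ((h2p.symm.pow_right k).eq_one_of_dvd
      ((dvd_mul_of_dvd_right (dvd_pow_self p (by omega)) _).trans h))
  have han : 2 ^ (k - 1) * p ^ m ∣ 2 ^ k * p ^ m :=
    mul_dvd_mul_right (Nat.pow_dvd_pow 2 (k.sub_le 1)) _
  have hbn : 2 ^ k ∣ 2 ^ k * p ^ m := dvd_mul_right _ _
  simp only [DihedralGroup.closure_r_eq, DihedralGroup.closure_r_sr_zero_eq,
    DihedralGroup.closure_sr_zero_eq, Nat.cast_one, ZMod.zmultiples_one_eq_top]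
  have h := DihedralGroup.isCrown_rotations_dihedralSubgroup
    (mt AddSubgroup.zmultiples_le.1 (mt (ZMod.natCast_mem_zmultiples_natCast_iff hbn).1 hba))
    (mt AddSubgroup.zmultiples_le.1 (mt (ZMod.natCast_mem_zmultiples_natCast_iff han).1 hab))
  have : NeZero (2 ^ k * p ^ m) := ⟨by simp [hp.ne_zero]⟩
  exact ⟨h, not_dismantlable_of_isCrown h⟩
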